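/- arXiv:1609.07456 — 3 statements merged into one kernel-verified Lean document; each statement's English description precedes it below -/
import Mathlib

section
/- Let i : Γ' → Γ be a homomorphism of finite groups and Ω a finite Γ-set. Then the maximal multiplicity of an irreducible representation of Γ in ℂ[Ω] is at most [Γ : i(Γ')] times the maximal multiplicity of an irreducible representation of Γ' in ℂ[Ω] (where Γ' acts on Ω through i). -/
/-!
Restricting along `i` and then to a simple `Γ'`-subrepresentation `σ` of `ρ` (one exists since
finite dimension makes every object of `FDRep` Artinian) gives a linear map
`Hom_Γ(ρ, ℂ[Ω]) → Hom_Γ'(σ, ℂ[Ω])`. It is injective because a nonzero map out of the simple `ρ`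
is a monomorphism, so its composite with `σ ↪ ρ` is again a monomorphism out of a nonzero object.
Hence `μ(Γ, Ω) ≤ μ(Γ', Ω)`, and `[Γ : i(Γ')] ≥ 1`.
-/

open CategoryTheory Limits Module

namespace CategoryTheory

lemma Limits.IsZero.of_faithful_of_isZero {C D : Type*} [Category C] [Category D]
    [HasZeroMorphisms C] [HasZeroMorphisms D] (F : C ⥤ D) [F.Faithful]
    [F.PreservesZeroMorphisms] {X : C} (hX : IsZero (F.obj X)) : IsZero X := by
  rw [IsZero.iff_id_eq_zero] at hX ⊢
  exact F.map_injective (by rw [F.map_id, F.map_zero, hX])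

lemma finrank_hom_le_finrank_hom_obj_of_mono {k C D : Type*} [Field k] [Category C] [Category D]
    [Preadditive C] [Preadditive D] [Linear k C] [Linear k D] [HasKernels C]
    (F : C ⥤ D) [F.Additive] [F.Linear k] [F.PreservesMonomorphisms]
    {X : C} [Simple X] (Y : C) {S : D} (ι : S ⟶ F.obj X) [Mono ι] (hS : ¬IsZero S)
    [FiniteDimensional k (S ⟶ F.obj Y)] :
    finrank k (X ⟶ Y) ≤ finrank k (S ⟶ F.obj Y) := by
  refine LinearMap.finrank_le_finrank_of_injective
    (f := Linear.leftComp k (F.obj Y) ι ∘ₗ F.mapLinearMap k) ?_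
  rw [injective_iff_map_eq_zero]
  intro f hf
  by_contra hf0
  have := mono_of_nonzero_from_simple hf0
  exact hS (IsZero.of_mono_eq_zero (ι ≫ F.map f) hf)

end CategoryTheory

namespace FDRep

variable {k G : Type*} [Field k] [Monoid G]

theorem injective_of_mono {X Y : FDRep k G} (f : X ⟶ Y) [Mono f] : Function.Injective f :=
  (ModuleCat.mono_iff_injective
    ((forget₂ (FGModuleCat k) (ModuleCat k)).map ((Action.forget _ G).map f))).1 inferInstance

instance {H : Type*} [Monoid H] (i : G →* H) :
    (Action.res (FGModuleCat k) i : FDRep k H ⥤ FDRep k G).PreservesMonomorphisms where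
  preserves f _ := ConcreteCategory.mono_of_injective _ (injective_of_mono f)

theorem finrank_lt_finrank_of_subobject_lt {X : FDRep k G} {P Q : Subobject X} (h : P < Q) :
    finrank k (P : FDRep k G) < finrank k (Q : FDRep k G) := by
  let ι := Subobject.ofLE P Q h.le
  have hι : Function.Injective ι.hom.hom.hom := injective_of_mono ι
  refine (LinearMap.finrank_le_finrank_of_injective hι).lt_of_ne fun heq => h.not_ge ?_
  have : IsIso ι := (ConcreteCategory.isIso_iff_bijective ι).2
    ⟨hι, (LinearMap.injective_iff_surjective_of_finrank_eq_finrank heq).1 hι⟩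
  exact Subobject.le_of_comm (inv ι) (by simp [ι])

instance isArtinianObject (X : FDRep k G) : IsArtinianObject X := by
  dsimp only [IsArtinianObject]
  rw [ObjectProperty.is_iff]
  exact StrictMono.wellFoundedLT (f := fun P : Subobject X => finrank k (P : FDRep k G))
    fun _ _ h => finrank_lt_finrank_of_subobject_lt h

end FDRep

theorem stmt1_general {Γ' Γ : Type} [Group Γ'] [Group Γ] [Fintype Γ]
    (i : Γ' →* Γ) (Ω : Type) [Fintype Ω] [MulAction Γ Ω] (M : ℕ)
    (hM : ∀ ρ' : FDRep ℂ Γ', Simple ρ' →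
      Module.finrank ℂ
        (ρ' ⟶ FDRep.of ((Representation.ofMulAction ℂ Γ Ω).comp i)) ≤ M)
    (ρ : FDRep ℂ Γ) (hρ : Simple ρ) :
    Module.finrank ℂ (ρ ⟶ FDRep.of (Representation.ofMulAction ℂ Γ Ω)) ≤
      i.range.index * M := by
  let res : FDRep ℂ Γ ⥤ FDRep ℂ Γ' := Action.res _ i
  have hres : ¬IsZero (res.obj ρ) := fun h => Simple.not_isZero ρ (h.of_faithful_of_isZero res)
  obtain ⟨σ, hσ⟩ := exists_simple_subobject hres
  calc finrank ℂ (ρ ⟶ FDRep.of (Representation.ofMulAction ℂ Γ Ω))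
      ≤ finrank ℂ ((σ : FDRep ℂ Γ') ⟶ res.obj (FDRep.of (Representation.ofMulAction ℂ Γ Ω))) :=
        finrank_hom_le_finrank_hom_obj_of_mono res _ σ.arrow (Simple.not_isZero _)
    _ ≤ M := hM σ hσ
    _ ≤ i.range.index * M := Nat.le_mul_of_pos_left M (Nat.pos_of_ne_zero Subgroup.index_ne_zero_of_finite)

/-- Let `i : Γ' → Γ` be a homomorphism of finite groups and `Ω` a finite
`Γ`-set.  Then the maximal multiplicity of an irreducible representation of `Γ` in `ℂ[Ω]`
is at most `[Γ : i(Γ')]` times the maximal multiplicity of an irreducible representation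
of `Γ'` in `ℂ[Ω]` (where `Γ'` acts on `Ω` through `i`).  We formulate the inequality of
maxima by saying that any bound `M` for all the `Γ'`-multiplicities yields the bound
`[Γ : i(Γ')] * M` for all the `Γ`-multiplicities. -/
theorem stmt1 {Γ' Γ : Type} [Group Γ'] [Fintype Γ'] [Group Γ] [Fintype Γ]
    (i : Γ' →* Γ) (Ω : Type) [Fintype Ω] [MulAction Γ Ω] (M : ℕ)
    (hM : ∀ ρ' : FDRep ℂ Γ', Simple ρ' →
      Module.finrank ℂ
        (ρ' ⟶ FDRep.of ((Representation.ofMulAction ℂ Γ Ω).comp i)) ≤ M)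
    (ρ : FDRep ℂ Γ) (hρ : Simple ρ) :
    Module.finrank ℂ (ρ ⟶ FDRep.of (Representation.ofMulAction ℂ Γ Ω)) ≤
      i.range.index * M :=
  stmt1_general i Ω M hM ρ hρ
end

section
/- Let Γ ⊆ Γ'' ⊆ Γ' be finite groups with Γ'' = Γ·Z(Γ'), and let Ω be a finite Γ-set. Then μ(Γ, Ω) ≤ μ(Γ'', Ω ×_Γ Γ''), i.e., the maximal multiplicity of an irreducible representation of Γ in ℂ[Ω] is at most the maximal multiplicity of an irreducible representation of Γ'' in the induced permutation representation Ind_Γ^{Γ''} ℂ[Ω]. -/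
open CategoryTheory

section InducedSet

variable {K L : Type} [Group K] [Group L] (j : K →* L) (Ω : Type) [MulAction K Ω]

/-- The diagonal `K`-orbit equivalence on `Ω × L` (`K` acting on `L` through `j` by
left translations): `(ω₁,g₁) ≈ (ω₂,g₂)` iff `γ·(ω₂,g₂) = (ω₁,g₁)` for some `γ : K`. -/
def indSetoid : Setoid (Ω × L) where
  r p q := ∃ γ : K, (γ • q.1, j γ * q.2) = p
  iseqv := by
    constructor
    · intro p; exact ⟨1, by simp⟩
    · rintro p q ⟨γ, rfl⟩
      exact ⟨γ⁻¹, by simp [smul_smul, ← mul_assoc]⟩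
    · rintro p q r ⟨γ, rfl⟩ ⟨δ, rfl⟩
      exact ⟨γ * δ, by simp [smul_smul, mul_assoc]⟩

/-- The induced set `Ω ×_K L`: the quotient of `Ω × L` by the diagonal `K`-action. -/
def IndSet := Quotient (indSetoid j Ω)

/-- `L` acts on `Ω ×_K L` by right translation on the second factor. -/
noncomputable instance : MulAction L (IndSet j Ω) where
  smul h := Quotient.lift (fun p => Quotient.mk (indSetoid j Ω) (p.1, p.2 * h⁻¹))
    (by rintro p q ⟨γ, rfl⟩
        exact Quotient.sound ⟨γ, by simp [mul_assoc]⟩)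
  one_smul := by
    rintro ⟨p⟩; exact Quotient.sound ⟨1, by simp⟩
  mul_smul := by
    rintro a b ⟨p⟩; exact Quotient.sound ⟨1, by simp [mul_assoc]⟩

noncomputable instance [Finite Ω] [Finite L] : Fintype (IndSet j Ω) := by
  classical
  exact @Quotient.fintype (Ω × L) (Fintype.ofFinite _) (indSetoid j Ω)
    (fun _ _ => Classical.dec _)

end InducedSet

/-!
Central elements of `Γ` act on an irreducible `ρ` by scalars (Schur), giving a character of
`Γ ∩ Z(Γ')`; extending it to a character `χ` of the finite abelian group `Z(Γ')` extends `ρ` to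
`σ(γz) = χ(z)ρ(γ)` on `Γ'' = Γ·Z(Γ')`, which is irreducible because its restriction to `Γ` is.
Frobenius reciprocity, in the form `f ↦ (v ↦ ([ω, g] ↦ f(g v)(ω)))`, then embeds
`Hom_Γ(ρ, ℂ[Ω])` into `Hom_Γ''(σ, ℂ[Ω ×_Γ Γ''])`.
-/

open MonoidAlgebra

theorem FDRep.hom_comm_apply {k G : Type} [Field k] [Monoid G] {X Y : FDRep k G} (f : X ⟶ Y)
    (g : G) (x : X) : f.hom.hom.hom (X.ρ g x) = Y.ρ g (f.hom.hom.hom x) :=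
  ConcreteCategory.congr_hom (f.comm g) x

section Frobenius

variable {k : Type} [Field k] {K L : Type} [Group K] [Group L] {j : K →* L}
  {Ω : Type} [MulAction K Ω] [Fintype Ω] [Finite L] {X : FDRep k L}
  (f : (Action.res _ j).obj X ⟶ FDRep.of (Representation.ofMulAction k K Ω))

omit [Finite L] in
theorem coeff_hom_ρ_mul_smul (γ : K) (g : L) (ω : Ω) (v : X) :
    (f.hom.hom.hom (X.ρ (j γ * g) v)).coeff (γ • ω) = (f.hom.hom.hom (X.ρ g v)).coeff ω := by
  have h : f.hom.hom.hom (X.ρ (j γ) (X.ρ g v)) =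
      Representation.ofMulAction k K Ω γ (f.hom.hom.hom (X.ρ g v)) :=
    FDRep.hom_comm_apply f γ (X.ρ g v)
  rw [map_mul, Module.End.mul_apply, h, Representation.coeff_ofMulAction, inv_smul_smul]

namespace IndSet

variable (j) in
def mk (ω : Ω) (g : L) : IndSet j Ω := Quotient.mk _ (ω, g)

omit [Fintype Ω] [Finite L] in
theorem smul_mk (g h : L) (ω : Ω) : g • mk j ω h = mk j ω (h * g⁻¹) := rfl

noncomputable def liftLinearMap : X →ₗ[k] k[IndSet j Ω] :=
  (coeffLinearEquiv k).symm.toLinearMap ∘ₗ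
    (Finsupp.linearEquivFunOnFinite k k _).symm.toLinearMap ∘ₗ
    LinearMap.pi (Quotient.lift
      (fun p : Ω × L => Finsupp.lapply p.1 ∘ₗ (coeffLinearEquiv k).toLinearMap ∘ₗ
        f.hom.hom.hom ∘ₗ X.ρ p.2) (by
        rintro p ⟨ω, g⟩ ⟨γ, rfl⟩
        ext v
        exact coeff_hom_ρ_mul_smul f γ g ω v))

theorem coeff_liftLinearMap (v : X) (ω : Ω) (g : L) :
    (liftLinearMap f v).coeff (mk j ω g) = (f.hom.hom.hom (X.ρ g v)).coeff ω :=
  rfl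

theorem coeff_liftLinearMap_one (v : X) (ω : Ω) :
    (liftLinearMap f v).coeff (mk j ω 1) = (f.hom.hom.hom v).coeff ω := by
  rw [coeff_liftLinearMap, map_one, Module.End.one_apply]

noncomputable def liftHom :
    X ⟶ FDRep.of (Representation.ofMulAction k L (IndSet j Ω)) where
  hom := FGModuleCat.ofHom (liftLinearMap f)
  comm g := by
    ext v q
    obtain ⟨ω, h⟩ := q
    change (liftLinearMap f (X.ρ g v)).coeff (mk j ω h) =
      (Representation.ofMulAction k L _ g (liftLinearMap f v)).coeff (mk j ω h)
    rw [Representation.coeff_ofMulAction, smul_mk, coeff_liftLinearMap, coeff_liftLinearMap,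
      inv_inv, map_mul, Module.End.mul_apply]

theorem liftHom_injective :
    Function.Injective (liftHom : ((Action.res _ j).obj X ⟶
      FDRep.of (Representation.ofMulAction k K Ω)) → _) := by
  intro f f' hf
  ext (v : X) ω
  have h : (liftLinearMap f v).coeff (mk j ω 1) = (liftLinearMap f' v).coeff (mk j ω 1) :=
    congrArg (fun φ => (φ.hom.hom.hom v).coeff (mk j ω 1)) hf
  rwa [coeff_liftLinearMap_one, coeff_liftLinearMap_one] at h

variable (k j Ω X) in
noncomputable def liftHomLinearMap :
    ((Action.res _ j).obj X ⟶ FDRep.of (Representation.ofMulAction k K Ω)) →ₗ[k]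
      (X ⟶ FDRep.of (Representation.ofMulAction k L (IndSet j Ω))) where
  toFun := liftHom
  map_add' f f' := by
    ext v ⟨ω, h⟩
    rfl
  map_smul' c f := by
    ext v ⟨ω, h⟩
    rfl

end IndSet

open Module in
theorem finrank_hom_res_le_finrank_hom_indSet :
    finrank k ((Action.res _ j).obj X ⟶ FDRep.of (Representation.ofMulAction k K Ω)) ≤
      finrank k (X ⟶ FDRep.of (Representation.ofMulAction k L (IndSet j Ω))) :=
  LinearMap.finrank_le_finrank_of_injective (f := IndSet.liftHomLinearMap k j Ω X)
    IndSet.liftHom_injective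

end Frobenius

section Extension

variable {k : Type} [Field k] {G : Type} [Group G]

theorem FDRep.exists_centralCharacter [IsAlgClosed k] (ρ : FDRep k G) [Simple ρ] :
    ∃ χ : Subgroup.center G →* kˣ, ∀ z : Subgroup.center G, ρ.ρ z = (χ z : k) • LinearMap.id := by
  let actionEnd : Subgroup.center G →* End ρ :=
    { toFun z := ⟨Action.ρ ρ z, fun g => by
        rw [← End.mul_def, ← End.mul_def, ← map_mul, ← map_mul, Subgroup.mem_center_iff.mp z.2 g]⟩
      map_one' := Action.Hom.ext (map_one (Action.ρ ρ))
      map_mul' z z' := Action.Hom.ext (map_mul (Action.ρ ρ) (z : G) z') }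
  let e : k ≃ₐ[k] End ρ := AlgEquiv.ofBijective (Algebra.ofId k (End ρ))
    ⟨(algebraMap k (End ρ)).injective, fun f => (endomorphism_simple_eq_smul_id k f).imp
      fun c hc => by rw [Algebra.ofId_apply, Algebra.algebraMap_eq_smul_one]; exact hc⟩
  refine ⟨(Units.map e.symm.toMonoidHom).comp actionEnd.toHomUnits, fun z => ?_⟩
  have hc : (e.symm (actionEnd z) : k) • 𝟙 ρ = actionEnd z := e.apply_symm_apply _
  exact (congrArg (fun f : End ρ => f.hom.hom.hom) hc).symm

theorem Representation.exists_extend_sup_center {V : Type} [AddCommGroup V] [Module k V]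
    (Γ : Subgroup G) (ρ : Representation k Γ V) (χ : Subgroup.center G →* kˣ)
    (hχ : ∀ (z : Subgroup.center G) (hz : (z : G) ∈ Γ), ρ ⟨z, hz⟩ = (χ z : k) • LinearMap.id) :
    ∃ σ : Representation k ↥(Γ ⊔ Subgroup.center G) V,
      ∀ γ : Γ, σ (Subgroup.inclusion le_sup_left γ) = ρ γ := by
  let m : Γ × Subgroup.center G →* ↥(Γ ⊔ Subgroup.center G) :=
    (Subgroup.inclusion le_sup_left).noncommCoprod (Subgroup.inclusion le_sup_right)
      fun γ z => Subtype.ext (Subgroup.mem_center_iff.mp z.2 γ)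
  have hm : Function.Surjective m := by
    rintro ⟨x, hx⟩
    rw [← SetLike.mem_coe, Subgroup.mul_normal] at hx
    obtain ⟨γ, hγ, z, hz, rfl⟩ := hx
    exact ⟨(⟨γ, hγ⟩, ⟨z, hz⟩), rfl⟩
  let scalar : kˣ →* Module.End k V :=
    (algebraMap k (Module.End k V) : k →* Module.End k V).comp (Units.coeHom k)
  let τ : Γ × Subgroup.center G →* Module.End k V :=
    ρ.noncommCoprod (scalar.comp χ) fun γ z => (Algebra.commutes ((χ z : kˣ) : k) (ρ γ)).symm
  have hker : m.ker ≤ τ.ker := by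
    rintro ⟨γ, z⟩ hγz
    have hγ : (γ : G) = ((z⁻¹ : Subgroup.center G) : G) :=
      eq_inv_of_mul_eq_one_left (congrArg Subtype.val hγz)
    have hz : ((z⁻¹ : Subgroup.center G) : G) ∈ Γ := hγ ▸ γ.2
    obtain rfl : γ = ⟨_, hz⟩ := Subtype.ext hγ
    change ρ _ * scalar (χ z) = 1
    rw [hχ]
    ext v
    simp [scalar, smul_smul]
  refine ⟨(QuotientGroup.lift m.ker τ hker).comp
    (QuotientGroup.quotientKerEquivOfSurjective m hm).symm.toMonoidHom, fun γ => ?_⟩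
  have hγ : Subgroup.inclusion le_sup_left γ = m (γ, 1) := Subtype.ext (mul_one _).symm
  have hγ' : (QuotientGroup.quotientKerEquivOfSurjective m hm).symm (m (γ, 1)) =
      ((γ, 1) : Γ × Subgroup.center G) :=
    (MulEquiv.symm_apply_eq _).mpr rfl
  rw [MonoidHom.comp_apply, hγ, MulEquiv.toMonoidHom_eq_coe, MonoidHom.coe_coe, hγ',
    QuotientGroup.lift_mk]
  change ρ γ * scalar (χ 1) = ρ γ
  rw [map_one, map_one, mul_one]

open scoped IsMulCommutative in
theorem FDRep.exists_extend_sup_center [Finite G] [IsAlgClosed k] [CharZero k]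
    (Γ : Subgroup G) (ρ : FDRep k Γ) [Simple ρ] :
    ∃ σ : Representation k ↥(Γ ⊔ Subgroup.center G) ρ,
      ∀ γ : Γ, σ (Subgroup.inclusion le_sup_left γ) = ρ.ρ γ := by
  obtain ⟨χΓ, hχΓ⟩ := ρ.exists_centralCharacter
  let S := Γ.subgroupOf (Subgroup.center G)
  let ι : S →* Subgroup.center Γ :=
    (((Subgroup.center G).subtype.comp S.subtype).codRestrict Γ fun s => s.2).codRestrict _
      fun s => Subgroup.mem_center_iff.mpr fun g => Subtype.ext (Subgroup.mem_center_iff.mp s.1.2 g)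
  have : NeZero (Monoid.exponent (Subgroup.center G)) := ⟨Monoid.exponent_ne_zero_of_finite⟩
  obtain ⟨χ, hχ⟩ := MonoidHom.domRestrict_surjective (M := k) S (χΓ.comp ι)
  refine Representation.exists_extend_sup_center Γ ρ.ρ χ fun z hz => ?_
  have hz' : χ z = χΓ (ι ⟨z, hz⟩) := DFunLike.congr_fun hχ ⟨z, hz⟩
  rw [hz']
  exact hχΓ (ι ⟨z, hz⟩)

end Extension

section Restriction

variable {k : Type} [Field k] {K L : Type} [Monoid K] [Monoid L] (j : K →* L)

instance : (Action.res (FGModuleCat k) j).PreservesMonomorphisms :=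
  have : (Action.res (FGModuleCat k) j ⋙ Action.forget (FGModuleCat k) K).PreservesMonomorphisms :=
    inferInstanceAs (Action.forget (FGModuleCat k) L).PreservesMonomorphisms
  Functor.preservesMonomorphisms_of_preserves_of_reflects _ (Action.forget (FGModuleCat k) K)

noncomputable def FDRep.resIsoOfEq {ρ : FDRep k K} {σ : Representation k L ρ}
    (h : ∀ γ, σ (j γ) = ρ.ρ γ) :
    (Action.res _ j).obj (FDRep.of σ) ≅ ρ :=
  Action.mkIso (Iso.refl _) fun γ => by
    ext v
    exact congrArg (fun φ => φ v) (h γ)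

end Restriction

/-- Let `Γ ⊆ Γ'' ⊆ Γ'` be finite groups with `Γ'' = Γ·Z(Γ')`, and let
`Ω` be a finite `Γ`-set.  Then `μ(Γ, Ω) ≤ μ(Γ'', Ω ×_Γ Γ'')`: the maximal multiplicity
of an irreducible representation of `Γ` in `ℂ[Ω]` is at most the maximal multiplicity of
an irreducible representation of `Γ''` in the induced permutation representation
`ℂ[Ω ×_Γ Γ'']`.  The inequality of maxima is formulated by saying that any bound `M` for
all the `Γ''`-multiplicities yields the bound `M` for all the `Γ`-multiplicities. -/
theorem stmt5 {G' : Type} [Group G'] [Fintype G'] (Γ : Subgroup G')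
    (Ω : Type) [Fintype Ω] [MulAction ↥Γ Ω] (M : ℕ)
    (hM : ∀ σ : FDRep ℂ ↥(Γ ⊔ Subgroup.center G'), Simple σ →
      Module.finrank ℂ
        (σ ⟶ FDRep.of (Representation.ofMulAction ℂ ↥(Γ ⊔ Subgroup.center G')
          (IndSet (Subgroup.inclusion (le_sup_left : Γ ≤ Γ ⊔ Subgroup.center G')) Ω))) ≤ M)
    (ρ : FDRep ℂ ↥Γ) (hρ : Simple ρ) :
    Module.finrank ℂ (ρ ⟶ FDRep.of (Representation.ofMulAction ℂ ↥Γ Ω)) ≤ M := by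
  obtain ⟨σ, hσ⟩ := FDRep.exists_extend_sup_center Γ ρ
  let e := FDRep.resIsoOfEq (Subgroup.inclusion le_sup_left) hσ
  have : Simple (FDRep.of σ) :=
    have := Simple.of_iso e
    Functor.simple_of_simple_obj (Action.res _ (Subgroup.inclusion le_sup_left)) _
  calc Module.finrank ℂ (ρ ⟶ FDRep.of (Representation.ofMulAction ℂ ↥Γ Ω))
      = Module.finrank ℂ ((Action.res _ (Subgroup.inclusion le_sup_left)).obj (FDRep.of σ) ⟶
          FDRep.of (Representation.ofMulAction ℂ ↥Γ Ω)) :=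
        (Linear.homCongr ℂ e.symm (Iso.refl _)).finrank_eq
    _ ≤ _ := finrank_hom_res_le_finrank_hom_indSet
    _ ≤ M := hM _ this
end

section
/- Let φ : ℂ(x₁,…,x_m) be a rational function in m variables over ℂ, and let v ∈ (ℂ^×)^m be such that φ is defined (regular) at vⁿ = (v₁ⁿ,…,v_mⁿ) for all positive integers n, and the set {φ(vⁿ) : n ∈ ℤ_{>0}} is finite. Then the function n ↦ φ(vⁿ) is periodic: there exists a positive integer T such that φ(v^{n+T}) = φ(vⁿ) for all n ∈ ℤ_{>0}. -/
/-!
Writing `φ = p/q`, both `n ↦ p(vⁿ)` and `n ↦ q(vⁿ)` are exponential sums `∑ cᵢ wᵢⁿ` with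
nonzero bases, the values at `v` of the monomials. For every shift `T` the cross difference
`p(v^(n+T)) q(vⁿ) - p(vⁿ) q(v^(n+T))` is again an exponential sum, whose bases are among the
`L` products of a base of `p` with a base of `q`; crucially `L` does not depend on `T`.
Since `φ(vⁿ)` takes finitely many values, two windows of `L` consecutive values coincide, at
distance `T` say. The cross difference for this `T` then vanishes at `L` consecutive integers,
so by the Vandermonde determinant all its coefficients vanish, and `φ(v^(n+T)) = φ(vⁿ)`.
-/

open Finset

theorem Finset.eq_zero_of_forall_lt_card_sum_mul_pow_eq_zero {R : Type*} [CommRing R] [IsDomain R]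
    {t : Finset R} (ht : 0 ∉ t) (b : R → R) (n₀ : ℕ)
    (h : ∀ j < #t, ∑ x ∈ t, b x * x ^ (n₀ + j) = 0) : ∀ x ∈ t, b x = 0 := by
  set e := t.equivFin
  have sum_fin (g : R → R) : ∑ j, g (e.symm j) = ∑ x ∈ t, g x := by
    rw [e.symm.sum_comp (fun x : t => g x), Finset.sum_coe_sort t g]
  have hv : (fun j => b (e.symm j) * (e.symm j : R) ^ n₀) = 0 := by
    refine Matrix.eq_zero_of_forall_pow_sum_mul_pow_eq_zero
      (f := fun j => (e.symm j : R)) (fun i j hij => e.symm.injective (Subtype.ext hij))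
      fun i => ?_
    simpa only [mul_assoc, ← pow_add, sum_fin fun x => b x * x ^ (n₀ + i)] using h i i.2
  intro x hx
  have hx' := congrFun hv (e ⟨x, hx⟩)
  simp only [Equiv.symm_apply_apply, Pi.zero_apply] at hx'
  exact (mul_eq_zero.mp hx').resolve_right (pow_ne_zero _ (ne_of_mem_of_not_mem hx ht))

theorem Finset.sum_mul_pow_eq_zero_of_forall_lt {R ι : Type*} [CommRing R] [IsDomain R]
    [DecidableEq R] (s : Finset ι) (a w : ι → R) (hw : ∀ i ∈ s, w i ≠ 0) (n₀ : ℕ)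
    (h : ∀ j < #(s.image w), ∑ i ∈ s, a i * w i ^ (n₀ + j) = 0) (n : ℕ) :
    ∑ i ∈ s, a i * w i ^ n = 0 := by
  have fiberwise (k : ℕ) : ∑ i ∈ s, a i * w i ^ k =
      ∑ x ∈ s.image w, (∑ i ∈ s with w i = x, a i) * x ^ k := by
    rw [← sum_fiberwise_of_maps_to (fun i hi => mem_image_of_mem w hi)]
    refine sum_congr rfl fun x _ => ?_
    rw [sum_mul]
    exact sum_congr rfl fun i hi => by rw [(mem_filter.mp hi).2]
  have hcoeff := eq_zero_of_forall_lt_card_sum_mul_pow_eq_zero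
    (by simpa using hw) _ n₀ fun j hj => (fiberwise _).symm.trans (h j hj)
  rw [fiberwise]
  exact sum_eq_zero fun x hx => by rw [hcoeff x hx, zero_mul]

theorem sum_mul_pow_add_mul_sub_eq {R ι κ : Type*} [CommRing R] (s : Finset ι) (t : Finset κ)
    (a α : ι → R) (b β : κ → R) (T n : ℕ) :
    (∑ i ∈ s, a i * α i ^ (n + T)) * (∑ j ∈ t, b j * β j ^ n) -
        (∑ i ∈ s, a i * α i ^ n) * (∑ j ∈ t, b j * β j ^ (n + T)) =
      ∑ x ∈ s ×ˢ t, a x.1 * b x.2 * (α x.1 ^ T - β x.2 ^ T) * (α x.1 * β x.2) ^ n := by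
  simp only [sum_mul_sum, ← sum_sub_distrib, sum_product]
  refine sum_congr rfl fun i _ => sum_congr rfl fun j _ => ?_
  ring

theorem exists_lt_forall_lt_add_eq_of_finite_range {α : Type*} {f : ℕ → α}
    (hf : (Set.range f).Finite) (L : ℕ) : ∃ a b, a < b ∧ ∀ j < L, f (a + j) = f (b + j) := by
  have := hf.to_subtype
  obtain ⟨a, b, hab, hwin⟩ := Finite.exists_ne_map_eq_of_infinite
    fun (n : ℕ) (j : Fin L) => (⟨f (n + j), Set.mem_range_self _⟩ : Set.range f)
  have hwin' (j : ℕ) (hj : j < L) : f (a + j) = f (b + j) :=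
    congrArg Subtype.val (congrFun hwin ⟨j, hj⟩)
  rcases hab.lt_or_gt with hlt | hlt
  · exact ⟨a, b, hlt, hwin'⟩
  · exact ⟨b, a, hlt, fun j hj => (hwin' j hj).symm⟩

theorem MvPolynomial.eval_pow_eq_sum {R σ : Type*} [CommRing R] (r : MvPolynomial σ R)
    (v : σ → R) (n : ℕ) :
    eval (fun i => v i ^ n) r =
      ∑ d ∈ r.support, r.coeff d * (d.prod fun i k => v i ^ k) ^ n := by
  rw [eval_eq]
  refine sum_congr rfl fun d _ => ?_
  rw [Finsupp.prod, ← prod_pow]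
  exact congrArg _ (prod_congr rfl fun i _ => by rw [← pow_mul, ← pow_mul, mul_comm])

theorem exists_period_div_of_finite_image {K ι κ : Type*} [Field K]
    (s : Finset ι) (t : Finset κ) (a α : ι → K) (b β : κ → K)
    (hα : ∀ i ∈ s, α i ≠ 0) (hβ : ∀ j ∈ t, β j ≠ 0) (P Q : ℕ → K)
    (hP : ∀ n, P n = ∑ i ∈ s, a i * α i ^ n) (hQ : ∀ n, Q n = ∑ j ∈ t, b j * β j ^ n)
    (hQ0 : ∀ n, 0 < n → Q n ≠ 0) (hfin : ((fun n => P n / Q n) '' Set.Ioi 0).Finite) :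
    ∃ T, 0 < T ∧ ∀ n, 0 < n → P (n + T) / Q (n + T) = P n / Q n := by
  classical
  set γ : ι × κ → K := fun x => α x.1 * β x.2
  have cross (T n : ℕ) : P (n + T) * Q n - P n * Q (n + T) =
      ∑ x ∈ s ×ˢ t, a x.1 * b x.2 * (α x.1 ^ T - β x.2 ^ T) * γ x ^ n := by
    simp only [hP, hQ]
    exact sum_mul_pow_add_mul_sub_eq ..
  have hγ : ∀ x ∈ s ×ˢ t, γ x ≠ 0 := fun x hx =>
    mul_ne_zero (hα _ (mem_product.mp hx).1) (hβ _ (mem_product.mp hx).2)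
  have hrange : (Set.range fun n => P (n + 1) / Q (n + 1)).Finite :=
    hfin.subset (Set.range_subset_iff.mpr fun n => ⟨n + 1, n.succ_pos, rfl⟩)
  obtain ⟨n₁, n₂, hlt, hwin⟩ :=
    exists_lt_forall_lt_add_eq_of_finite_range hrange #((s ×ˢ t).image γ)
  refine ⟨n₂ - n₁, by omega, fun n hn => ?_⟩
  have hcross_zero (k : ℕ) : P (k + (n₂ - n₁)) * Q k - P k * Q (k + (n₂ - n₁)) = 0 := by
    rw [cross]
    refine sum_mul_pow_eq_zero_of_forall_lt _ _ _ hγ (n₁ + 1) (fun j hj => ?_) k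
    have hj' := hwin j hj
    rw [show n₂ + j + 1 = n₁ + 1 + j + (n₂ - n₁) by omega,
      show n₁ + j + 1 = n₁ + 1 + j by omega,
      div_eq_div_iff (hQ0 _ (by omega)) (hQ0 _ (by omega))] at hj'
    rw [← cross, hj', sub_self]
  rw [div_eq_div_iff (hQ0 _ (by omega)) (hQ0 n hn), ← sub_eq_zero]
  exact hcross_zero n

/-- Let `φ = p/q` be a rational function in `m` variables over `ℂ`
(given by polynomials `p, q` with `q` not vanishing at the relevant points, i.e. `φ` is
regular there), and let `v ∈ (ℂ^×)^m` be such that `φ` is defined at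
`vⁿ = (v₁ⁿ,…,v_mⁿ)` for all positive integers `n`, and the set `{φ(vⁿ) : n > 0}` is
finite.  Then `n ↦ φ(vⁿ)` is periodic: there is `T > 0` with `φ(v^(n+T)) = φ(vⁿ)` for
all `n > 0`. -/
theorem stmt6 {m : ℕ} (p q : MvPolynomial (Fin m) ℂ) (v : Fin m → ℂ)
    (hv : ∀ i, v i ≠ 0)
    (hreg : ∀ n : ℕ, 0 < n → MvPolynomial.eval (fun i => v i ^ n) q ≠ 0)
    (hfin : {c : ℂ | ∃ n : ℕ, 0 < n ∧
        c = MvPolynomial.eval (fun i => v i ^ n) p /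
            MvPolynomial.eval (fun i => v i ^ n) q}.Finite) :
    ∃ T : ℕ, 0 < T ∧ ∀ n : ℕ, 0 < n →
      MvPolynomial.eval (fun i => v i ^ (n + T)) p /
          MvPolynomial.eval (fun i => v i ^ (n + T)) q =
        MvPolynomial.eval (fun i => v i ^ n) p /
          MvPolynomial.eval (fun i => v i ^ n) q := by
  have hw (d : Fin m →₀ ℕ) : (d.prod fun i k => v i ^ k) ≠ 0 :=
    Finsupp.prod_ne_zero_iff.mpr fun i _ => pow_ne_zero _ (hv i)
  exact exists_period_div_of_finite_image _ _ _ _ _ _ (fun d _ => hw d) (fun d _ => hw d) _ _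
    (MvPolynomial.eval_pow_eq_sum p v) (MvPolynomial.eval_pow_eq_sum q v) hreg
    (hfin.subset (by rintro _ ⟨n, hn, rfl⟩; exact ⟨n, hn, rfl⟩))
end
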